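/- arXiv:2307.13389 — 8 statements merged into one kernel-verified Lean document; each statement's English description precedes it below -/
import Mathlib

section
/- For all X, Y ∈ V one has g(JX, JY) = g(X, Y), i.e. the almost complex structure J is compatible with the metric g. -/
/-!
For 2×2 matrices `adj a = tr a • 1 - a`, so `⟨a, b⟩ = -(tr a tr b - tr (a b))/2` is bilinear.
Compatibility of `J` with `g` is then an identity valid for every bilinear form `B`: writing
`J = c • [[1, -2], [2, -1]]`, `X = (a, b)` and `Y = (p, q)`, the two sides of
`g(JX, JY) = g(X, Y)` are `c²` and `1/3` times `2B(a,p) - B(a,q) - B(b,p) + 2B(b,q)`,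
and `3c² = 1`.
-/

open Matrix

/-- The indefinite inner product `⟨a,b⟩ = -(1/2)·Trace(adj(a)·b)` on 2×2 real matrices. -/
noncomputable def ip (a b : Matrix (Fin 2) (Fin 2) ℝ) : ℝ :=
  -(1/2 : ℝ) * (a.adjugate * b).trace

/-- The product metric `⟨(α,β),(γ,δ)⟩_E = ⟨α,γ⟩ + ⟨β,δ⟩`. -/
noncomputable def ipE (X Y : Matrix (Fin 2) (Fin 2) ℝ × Matrix (Fin 2) (Fin 2) ℝ) : ℝ :=
  ip X.1 Y.1 + ip X.2 Y.2

/-- The nearly Kähler metric `g`. -/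
noncomputable def g (X Y : Matrix (Fin 2) (Fin 2) ℝ × Matrix (Fin 2) (Fin 2) ℝ) : ℝ :=
  (2/3 : ℝ) * ipE X Y - (1/3 : ℝ) * ipE (X.2, X.1) Y

/-- The almost complex structure `J(α,β) = (1/√3)·(α − 2β, 2α − β)`. -/
noncomputable def Jmap (X : Matrix (Fin 2) (Fin 2) ℝ × Matrix (Fin 2) (Fin 2) ℝ) :
    Matrix (Fin 2) (Fin 2) ℝ × Matrix (Fin 2) (Fin 2) ℝ :=
  (Real.sqrt 3)⁻¹ • (X.1 - (2:ℝ) • X.2, (2:ℝ) • X.1 - X.2)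

/-- The almost product structure `P(α,β) = (β,α)`. -/
def Pmap (X : Matrix (Fin 2) (Fin 2) ℝ × Matrix (Fin 2) (Fin 2) ℝ) :
    Matrix (Fin 2) (Fin 2) ℝ × Matrix (Fin 2) (Fin 2) ℝ :=
  (X.2, X.1)

/-- The cross product `α×β = (1/2)(αβ − βα)` on `sl(2,ℝ)`. -/
noncomputable def cross (a b : Matrix (Fin 2) (Fin 2) ℝ) : Matrix (Fin 2) (Fin 2) ℝ :=
  (1/2 : ℝ) • (a * b - b * a)

/-- The tensor `G`. -/
noncomputable def Gmap (X Y : Matrix (Fin 2) (Fin 2) ℝ × Matrix (Fin 2) (Fin 2) ℝ) :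
    Matrix (Fin 2) (Fin 2) ℝ × Matrix (Fin 2) (Fin 2) ℝ :=
  (2 / (3 * Real.sqrt 3)) •
    (-(cross X.1 Y.1) - cross X.1 Y.2 + cross Y.1 X.2 + (2:ℝ) • cross X.2 Y.2,
     -((2:ℝ) • cross X.1 Y.1) + cross X.1 Y.2 - cross Y.1 X.2 + cross X.2 Y.2)


theorem Matrix.adjugate_fin_two_eq {R : Type*} [CommRing R] (A : Matrix (Fin 2) (Fin 2) R) :
    A.adjugate = A.trace • 1 - A := by
  ext i j
  fin_cases i <;> fin_cases j <;> simp [adjugate_fin_two, trace_fin_two]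

theorem ip_eq (a b : Matrix (Fin 2) (Fin 2) ℝ) :
    ip a b = -(1/2 : ℝ) * (a.trace * b.trace - (a * b).trace) := by
  rw [ip, adjugate_fin_two_eq, sub_mul, smul_mul_assoc, one_mul, trace_sub, trace_smul,
    smul_eq_mul]

noncomputable def ipForm : LinearMap.BilinForm ℝ (Matrix (Fin 2) (Fin 2) ℝ) :=
  LinearMap.mk₂ ℝ ip
    (fun a a' b => by simp only [ip_eq, trace_add, add_mul]; ring)
    (fun r a b => by simp only [ip_eq, trace_smul, smul_mul_assoc, smul_eq_mul]; ring)
    (fun a b b' => by simp only [ip_eq, trace_add, mul_add]; ring)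
    (fun r a b => by simp only [ip_eq, trace_smul, mul_smul_comm, smul_eq_mul]; ring)

section NearlyKahler

variable {K M : Type*} [Field K] [AddCommGroup M] [Module K M]

def nkMetric (B : LinearMap.BilinForm K M) (X Y : M × M) : K :=
  (2/3 : K) * (B X.1 Y.1 + B X.2 Y.2) - (1/3 : K) * (B X.2 Y.1 + B X.1 Y.2)

def nkJ (c : K) (X : M × M) : M × M :=
  c • (X.1 - (2:K) • X.2, (2:K) • X.1 - X.2)

theorem nkMetric_nkJ (B : LinearMap.BilinForm K M) {c : K} (hc : 3 * c ^ 2 = 1) (X Y : M × M) :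
    nkMetric B (nkJ c X) (nkJ c Y) = nkMetric B X Y := by
  obtain ⟨a, b⟩ := X
  obtain ⟨p, q⟩ := Y
  simp only [nkMetric, nkJ, Prod.smul_mk, map_sub, map_smul, LinearMap.sub_apply,
    LinearMap.smul_apply, smul_eq_mul]
  linear_combination (2 * B a p - B a q - B b p + 2 * B b q) / 3 * hc

end NearlyKahler

theorem g_eq_nkMetric (X Y : Matrix (Fin 2) (Fin 2) ℝ × Matrix (Fin 2) (Fin 2) ℝ) :
    g X Y = nkMetric ipForm X Y :=
  rfl

theorem stmt_3_general (X Y : Matrix (Fin 2) (Fin 2) ℝ × Matrix (Fin 2) (Fin 2) ℝ) :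
    g (Jmap X) (Jmap Y) = g X Y := by
  have hc : 3 * (Real.sqrt 3)⁻¹ ^ 2 = 1 := by
    rw [inv_pow, Real.sq_sqrt (by norm_num : (0:ℝ) ≤ 3), mul_inv_cancel₀ three_ne_zero]
  rw [g_eq_nkMetric, g_eq_nkMetric]
  exact nkMetric_nkJ ipForm hc X Y

/-- `g(JX, JY) = g(X, Y)` on `V = sl(2,ℝ) × sl(2,ℝ)`. -/
theorem stmt_3 (X Y : Matrix (Fin 2) (Fin 2) ℝ × Matrix (Fin 2) (Fin 2) ℝ)
    (hX1 : X.1.trace = 0) (hX2 : X.2.trace = 0)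
    (hY1 : Y.1.trace = 0) (hY2 : Y.2.trace = 0) :
    g (Jmap X) (Jmap Y) = g X Y :=
  stmt_3_general X Y
end

section
/- The almost product structure P satisfies, for all X, Y ∈ V: P∘P = Id, P∘J = −J∘P, g(PX,PY) = g(X,Y), and g(PX,Y) = g(X,PY). -/
open Matrix

theorem Pmap_involutive : Function.Involutive Pmap := fun _ => rfl

theorem Pmap_Jmap (X : Matrix (Fin 2) (Fin 2) ℝ × Matrix (Fin 2) (Fin 2) ℝ) :
    Pmap (Jmap X) = -Jmap (Pmap X) := by
  simp only [Pmap, Jmap, Prod.ext_iff, Prod.fst_neg, Prod.snd_neg, Prod.smul_mk]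
  constructor <;> module

theorem ipE_Pmap_Pmap (X Y : Matrix (Fin 2) (Fin 2) ℝ × Matrix (Fin 2) (Fin 2) ℝ) :
    ipE (Pmap X) (Pmap Y) = ipE X Y :=
  add_comm _ _

theorem ipE_Pmap_left (X Y : Matrix (Fin 2) (Fin 2) ℝ × Matrix (Fin 2) (Fin 2) ℝ) :
    ipE (Pmap X) Y = ipE X (Pmap Y) :=
  add_comm _ _

theorem g_eq_ipE (X Y : Matrix (Fin 2) (Fin 2) ℝ × Matrix (Fin 2) (Fin 2) ℝ) :
    g X Y = (2/3 : ℝ) * ipE X Y - (1/3 : ℝ) * ipE (Pmap X) Y :=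
  rfl

theorem g_Pmap_Pmap (X Y : Matrix (Fin 2) (Fin 2) ℝ × Matrix (Fin 2) (Fin 2) ℝ) :
    g (Pmap X) (Pmap Y) = g X Y := by
  rw [g_eq_ipE, g_eq_ipE, ipE_Pmap_Pmap, Pmap_involutive X, ← ipE_Pmap_left]

theorem g_Pmap_left (X Y : Matrix (Fin 2) (Fin 2) ℝ × Matrix (Fin 2) (Fin 2) ℝ) :
    g (Pmap X) Y = g X (Pmap Y) := by
  rw [g_eq_ipE, g_eq_ipE, ipE_Pmap_Pmap, Pmap_involutive X, ipE_Pmap_left]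

theorem stmt_5_general (X Y : Matrix (Fin 2) (Fin 2) ℝ × Matrix (Fin 2) (Fin 2) ℝ) :
    Pmap (Pmap X) = X ∧
    Pmap (Jmap X) = -(Jmap (Pmap X)) ∧
    g (Pmap X) (Pmap Y) = g X Y ∧
    g (Pmap X) Y = g X (Pmap Y) :=
  ⟨Pmap_involutive X, Pmap_Jmap X, g_Pmap_Pmap X Y, g_Pmap_left X Y⟩

/-- Properties of the almost product structure `P`. -/
theorem stmt_5 (X Y : Matrix (Fin 2) (Fin 2) ℝ × Matrix (Fin 2) (Fin 2) ℝ)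
    (hX1 : X.1.trace = 0) (hX2 : X.2.trace = 0)
    (hY1 : Y.1.trace = 0) (hY2 : Y.2.trace = 0) :
    Pmap (Pmap X) = X ∧
    Pmap (Jmap X) = -(Jmap (Pmap X)) ∧
    g (Pmap X) (Pmap Y) = g X Y ∧
    g (Pmap X) Y = g X (Pmap Y) :=
  stmt_5_general X Y
end

section
/- Define Q : V → V by Q(α,β) = (−α,β). Then for all X ∈ V one has QX = −(1/√3)·(2·P(JX) − JX), i.e. the natural product structure Q of the product manifold is expressed in terms of P and J. -/
open Matrix

def Qmap (X : Matrix (Fin 2) (Fin 2) ℝ × Matrix (Fin 2) (Fin 2) ℝ) :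
    Matrix (Fin 2) (Fin 2) ℝ × Matrix (Fin 2) (Fin 2) ℝ :=
  (-X.1, X.2)

theorem two_smul_Pmap_Jmap_sub_Jmap (X : Matrix (Fin 2) (Fin 2) ℝ × Matrix (Fin 2) (Fin 2) ℝ) :
    (2:ℝ) • Pmap (Jmap X) - Jmap X = Real.sqrt 3 • (X.1, -X.2) := by
  have hsqrt : Real.sqrt 3 = 3 * (Real.sqrt 3)⁻¹ := by
    field_simp
    rw [Real.sq_sqrt (by norm_num)]
  rw [hsqrt]
  ext1 <;> simp only [Jmap, Pmap, Prod.smul_fst, Prod.smul_snd, Prod.fst_sub, Prod.snd_sub] <;>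
    module

theorem stmt_6_general (X : Matrix (Fin 2) (Fin 2) ℝ × Matrix (Fin 2) (Fin 2) ℝ) :
    Qmap X = -((Real.sqrt 3)⁻¹ • ((2:ℝ) • Pmap (Jmap X) - Jmap X)) := by
  rw [two_smul_Pmap_Jmap_sub_Jmap, inv_smul_smul₀ (by positivity)]
  simp [Qmap]

/-- `QX = −(1/√3)·(2·P(JX) − JX)` on `V = sl(2,ℝ) × sl(2,ℝ)`. -/
theorem stmt_6 (X : Matrix (Fin 2) (Fin 2) ℝ × Matrix (Fin 2) (Fin 2) ℝ)
    (hX1 : X.1.trace = 0) (hX2 : X.2.trace = 0) :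
    Qmap X = -((Real.sqrt 3)⁻¹ • ((2:ℝ) • Pmap (Jmap X) - Jmap X)) :=
  stmt_6_general X
end

section
/- For all X, Y ∈ V one has G(X, JY) + J(G(X,Y)) = 0. -/
open Matrix

/-!
With `X = (α, β)` and `Y = (γ, δ)`, bilinearity and antisymmetry of `×` give
`G(X, JY) = (2/3)·(-α×γ + α×δ - γ×β, α×δ - γ×β - β×δ)`, and `J(G(X, Y))` expands to
exactly the negative of this.
-/

theorem cross_sub_left (a b c : Matrix (Fin 2) (Fin 2) ℝ) :
    cross (a - b) c = cross a c - cross b c := by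
  simp only [cross, mul_sub, sub_mul]
  module

theorem cross_sub_right (a b c : Matrix (Fin 2) (Fin 2) ℝ) :
    cross a (b - c) = cross a b - cross a c := by
  simp only [cross, mul_sub, sub_mul]
  module

theorem cross_smul_left (r : ℝ) (a b : Matrix (Fin 2) (Fin 2) ℝ) :
    cross (r • a) b = r • cross a b := by
  simp only [cross, smul_mul_assoc, mul_smul_comm]
  module

theorem cross_smul_right (r : ℝ) (a b : Matrix (Fin 2) (Fin 2) ℝ) :
    cross a (r • b) = r • cross a b := by
  simp only [cross, smul_mul_assoc, mul_smul_comm]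
  module

theorem cross_swap (a b : Matrix (Fin 2) (Fin 2) ℝ) : cross b a = -cross a b := by
  simp only [cross]
  module

theorem stmt_8_general (X Y : Matrix (Fin 2) (Fin 2) ℝ × Matrix (Fin 2) (Fin 2) ℝ) :
    Gmap X (Jmap Y) + Jmap (Gmap X Y) = 0 := by
  obtain ⟨α, β⟩ := X
  obtain ⟨γ, δ⟩ := Y
  simp only [Gmap, Jmap, Prod.smul_mk, Prod.mk_add_mk, Prod.mk_eq_zero, cross_sub_left,
    cross_sub_right, cross_smul_left, cross_smul_right, cross_swap β γ, cross_swap δ β]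
  constructor <;> module

/-- `G(X, JY) + J(G(X,Y)) = 0` on `V = sl(2,ℝ) × sl(2,ℝ)`. -/
theorem stmt_8 (X Y : Matrix (Fin 2) (Fin 2) ℝ × Matrix (Fin 2) (Fin 2) ℝ)
    (hX1 : X.1.trace = 0) (hX2 : X.2.trace = 0)
    (hY1 : Y.1.trace = 0) (hY2 : Y.2.trace = 0) :
    Gmap X (Jmap Y) + Jmap (Gmap X Y) = 0 :=
  stmt_8_general X Y
end

section
/- For all X, Y, Z ∈ V one has g(G(X,Y),Z) + g(G(X,Z),Y) = 0. -/
open Matrix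

/-!
For a 2×2 matrix `adj a = tr a • 1 - a`, so `⟨a, b⟩ = ½ (tr(ab) - tr a · tr b)`, and commutators are
traceless; hence `g(G(X,Y),Z)` is a combination of the terms `tr((X.i × Y.j) Z.k)` whose coefficients
are symmetric in `j, k`. Since `tr((a × b) c)` is antisymmetric in `b, c` (cyclicity of the trace),
exchanging `Y` and `Z` changes the sign.
-/

lemma adjugate_fin_two_eq_trace_smul_one_sub {R : Type*} [CommRing R]
    (A : Matrix (Fin 2) (Fin 2) R) : A.adjugate = A.trace • (1 : Matrix (Fin 2) (Fin 2) R) - A := by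
  ext i j
  fin_cases i <;> fin_cases j <;> simp [adjugate_fin_two, trace_fin_two]

lemma ip_eq_half_trace_mul_sub (a b : Matrix (Fin 2) (Fin 2) ℝ) :
    ip a b = (1/2 : ℝ) * ((a * b).trace - a.trace * b.trace) := by
  rw [ip, adjugate_fin_two_eq_trace_smul_one_sub, sub_mul, smul_mul, one_mul, trace_sub,
    trace_smul, smul_eq_mul]
  ring

lemma trace_cross (a b : Matrix (Fin 2) (Fin 2) ℝ) : (cross a b).trace = 0 := by
  rw [cross, trace_smul, trace_sub, trace_mul_comm, sub_self, smul_zero]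

lemma cross_eq_neg_cross (a b : Matrix (Fin 2) (Fin 2) ℝ) : cross a b = -cross b a := by
  rw [cross, cross, ← smul_neg, neg_sub]

lemma trace_commutator_mul_swap {n R : Type*} [Fintype n] [CommRing R]
    (a b c : Matrix n n R) : ((a * b - b * a) * c).trace = -((a * c - c * a) * b).trace := by
  simp only [sub_mul, trace_sub]
  rw [trace_mul_cycle a c b, ← trace_mul_cycle a b c]
  abel

lemma trace_cross_mul_swap (a b c : Matrix (Fin 2) (Fin 2) ℝ) :
    (cross a b * c).trace = -(cross a c * b).trace := by
  rw [cross, cross, smul_mul, smul_mul, trace_smul, trace_smul, trace_commutator_mul_swap,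
    smul_neg]

lemma g_Gmap_eq (X Y Z : Matrix (Fin 2) (Fin 2) ℝ × Matrix (Fin 2) (Fin 2) ℝ) :
    g (Gmap X Y) Z = (3 * Real.sqrt 3)⁻¹ *
      ((cross X.1 Y.2 * Z.2).trace - (cross X.1 Y.2 * Z.1).trace - (cross X.1 Y.1 * Z.2).trace
        + (cross X.2 Y.2 * Z.1).trace + (cross X.2 Y.1 * Z.2).trace
        - (cross X.2 Y.1 * Z.1).trace) := by
  simp only [g, ipE, ip_eq_half_trace_mul_sub, Gmap, cross_eq_neg_cross Y.1 X.2, Prod.smul_fst,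
    Prod.smul_snd, smul_mul, add_mul, sub_mul, neg_mul, trace_add, trace_sub, trace_neg, trace_smul, smul_eq_mul,
    trace_cross]
  field_simp
  ring

theorem stmt_9_general (X Y Z : Matrix (Fin 2) (Fin 2) ℝ × Matrix (Fin 2) (Fin 2) ℝ) :
    g (Gmap X Y) Z + g (Gmap X Z) Y = 0 := by
  rw [g_Gmap_eq, g_Gmap_eq]
  simp only [trace_cross_mul_swap _ Z.1, trace_cross_mul_swap _ Z.2]
  ring

/-- `g(G(X,Y),Z) + g(G(X,Z),Y) = 0` on `V = sl(2,ℝ) × sl(2,ℝ)`. -/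
theorem stmt_9 (X Y Z : Matrix (Fin 2) (Fin 2) ℝ × Matrix (Fin 2) (Fin 2) ℝ)
    (hX1 : X.1.trace = 0) (hX2 : X.2.trace = 0)
    (hY1 : Y.1.trace = 0) (hY2 : Y.2.trace = 0)
    (hZ1 : Z.1.trace = 0) (hZ2 : Z.2.trace = 0) :
    g (Gmap X Y) Z + g (Gmap X Z) Y = 0 :=
  stmt_9_general X Y Z
end

section
/- For all X, Y ∈ V one has P(G(X,Y)) + G(PX,PY) = 0. -/
open Matrix

theorem stmt_11_general (X Y : Matrix (Fin 2) (Fin 2) ℝ × Matrix (Fin 2) (Fin 2) ℝ) :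
    Pmap (Gmap X Y) + Gmap (Pmap X) (Pmap Y) = 0 := by
  -- With `X = (α,β)`, `Y = (γ,δ)`, each component of the sum is a multiple of
  -- `α×δ + δ×α - (γ×β + β×γ)`, so antisymmetry of `×` is all that is needed.
  simp only [Pmap, Gmap, Prod.smul_mk, Prod.mk_add_mk, Prod.mk_eq_zero,
    cross_swap X.1 Y.2, cross_swap Y.1 X.2]
  constructor <;> module

/-- `P(G(X,Y)) + G(PX,PY) = 0` on `V = sl(2,ℝ) × sl(2,ℝ)`. -/
theorem stmt_11 (X Y : Matrix (Fin 2) (Fin 2) ℝ × Matrix (Fin 2) (Fin 2) ℝ)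
    (hX1 : X.1.trace = 0) (hX2 : X.2.trace = 0)
    (hY1 : Y.1.trace = 0) (hY2 : Y.2.trace = 0) :
    Pmap (Gmap X Y) + Gmap (Pmap X) (Pmap Y) = 0 :=
  stmt_11_general X Y
end

section
/- The space has constant type −2/3: for all X, Y, Z, W ∈ V one has g(G(X,Y),G(Z,W)) = −(2/3)·( g(X,Z)·g(Y,W) − g(X,W)·g(Y,Z) + g(JX,Z)·g(Y,JW) − g(JX,W)·g(Y,JZ) ). -/
open Matrix

/-!
For traceless `a` the adjugate is `-a`, so on `sl(2,ℝ)` the form is `⟨a,b⟩ = tr(ab)/2`, of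
signature `(2,1)`, and the cross product obeys the Lorentzian Lagrange identity
`⟨a×b, c×d⟩ = -(⟨a,c⟩⟨b,d⟩ - ⟨a,d⟩⟨b,c⟩)`. Since `G`, `g` and `J` are (bi)linear, expanding
both sides in the components of `X, Y, Z, W` and applying this identity to every term of the
left side leaves a polynomial identity in the pairings `⟨Xᵢ,Zⱼ⟩, ⟨Xᵢ,Wⱼ⟩, ⟨Yᵢ,Zⱼ⟩, ⟨Yᵢ,Wⱼ⟩`.
-/

theorem Matrix.adjugate_fin_two_eq_trace_smul_sub {R : Type*} [CommRing R]
    (a : Matrix (Fin 2) (Fin 2) R) : adjugate a = trace a • 1 - a := by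
  ext i j
  fin_cases i <;> fin_cases j <;> simp [adjugate_fin_two, trace_fin_two]

theorem Matrix.apply_one_one_eq_neg_of_trace_eq_zero {R : Type*} [Ring R]
    {a : Matrix (Fin 2) (Fin 2) R} (ha : trace a = 0) : a 1 1 = -a 0 0 :=
  eq_neg_of_add_eq_zero_right (by rwa [trace_fin_two] at ha)

lemma ip_eq_trace (a b : Matrix (Fin 2) (Fin 2) ℝ) :
    ip a b = (trace (a * b) - trace a * trace b) / 2 := by
  rw [ip, adjugate_fin_two_eq_trace_smul_sub, sub_mul, smul_mul_assoc, one_mul, trace_sub,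
    trace_smul, smul_eq_mul]
  ring

section Bilinear

variable (a b c : Matrix (Fin 2) (Fin 2) ℝ) (r : ℝ)

lemma ip_add_left : ip (a + b) c = ip a c + ip b c := by
  simp only [ip_eq_trace, add_mul, trace_add]; ring

lemma ip_add_right : ip a (b + c) = ip a b + ip a c := by
  simp only [ip_eq_trace, mul_add, trace_add]; ring

lemma ip_sub_left : ip (a - b) c = ip a c - ip b c := by
  simp only [ip_eq_trace, sub_mul, trace_sub]; ring

lemma ip_sub_right : ip a (b - c) = ip a b - ip a c := by
  simp only [ip_eq_trace, mul_sub, trace_sub]; ring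

lemma ip_neg_left : ip (-a) b = -ip a b := by
  simp only [ip_eq_trace, neg_mul, trace_neg]; ring

lemma ip_neg_right : ip a (-b) = -ip a b := by
  simp only [ip_eq_trace, mul_neg, trace_neg]; ring

lemma ip_smul_left : ip (r • a) b = r * ip a b := by
  simp only [ip_eq_trace, smul_mul_assoc, trace_smul, smul_eq_mul]; ring

lemma ip_smul_right : ip a (r • b) = r * ip a b := by
  simp only [ip_eq_trace, mul_smul_comm, trace_smul, smul_eq_mul]; ring

end Bilinear

lemma ip_cross_cross {a b c d : Matrix (Fin 2) (Fin 2) ℝ} (ha : trace a = 0) (hb : trace b = 0)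
    (hc : trace c = 0) (hd : trace d = 0) :
    ip (cross a b) (cross c d) = -(ip a c * ip b d - ip a d * ip b c) := by
  simp only [ip_eq_trace, cross, trace_fin_two, mul_apply, Fin.sum_univ_two, Matrix.smul_apply,
    Matrix.sub_apply, apply_one_one_eq_neg_of_trace_eq_zero ha,
    apply_one_one_eq_neg_of_trace_eq_zero hb, apply_one_one_eq_neg_of_trace_eq_zero hc,
    apply_one_one_eq_neg_of_trace_eq_zero hd]
  ring

section Metric

variable (r : ℝ) (A B : Matrix (Fin 2) (Fin 2) ℝ × Matrix (Fin 2) (Fin 2) ℝ)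

lemma g_smul_left : g (r • A) B = r * g A B := by
  simp only [g, ipE, Prod.smul_fst, Prod.smul_snd, ip_smul_left]; ring

lemma g_smul_right : g A (r • B) = r * g A B := by
  simp only [g, ipE, Prod.smul_fst, Prod.smul_snd, ip_smul_right]; ring

end Metric

/-- The pseudo-nearly Kähler `SL(2,ℝ)×SL(2,ℝ)` has constant type `−2/3`. -/
theorem stmt_12 (X Y Z W : Matrix (Fin 2) (Fin 2) ℝ × Matrix (Fin 2) (Fin 2) ℝ)
    (hX1 : X.1.trace = 0) (hX2 : X.2.trace = 0)
    (hY1 : Y.1.trace = 0) (hY2 : Y.2.trace = 0)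
    (hZ1 : Z.1.trace = 0) (hZ2 : Z.2.trace = 0)
    (hW1 : W.1.trace = 0) (hW2 : W.2.trace = 0) :
    g (Gmap X Y) (Gmap Z W) =
      -(2/3 : ℝ) * (g X Z * g Y W - g X W * g Y Z
        + g (Jmap X) Z * g Y (Jmap W) - g (Jmap X) W * g Y (Jmap Z)) := by
  have h3 : √3 ^ 2 = 3 := Real.sq_sqrt (by norm_num)
  have hG : ∀ r : ℝ, 2 / (3 * √3) * (2 / (3 * √3) * r) = 4 / 27 * r := fun r => by
    field_simp; rw [h3]; ring
  have hJ : ∀ r t : ℝ, (√3)⁻¹ * r * ((√3)⁻¹ * t) = 1 / 3 * (r * t) := fun r t => by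
    field_simp; rw [h3]; ring
  simp only [Gmap, Jmap, g_smul_left, g_smul_right, hG, hJ]
  simp only [g, ipE, ip_add_left, ip_add_right, ip_sub_left, ip_sub_right, ip_neg_left,
    ip_neg_right, ip_smul_left, ip_smul_right, ip_cross_cross, hX1, hX2, hY1, hY2, hZ1, hZ2, hW1,
    hW2]
  ring
end

section
/- For all α, γ ∈ sl(2,ℝ) one has g((0,α), J(0,γ)) = 0, and moreover P(0,α) = −(1/2)·(0,α) − (√3/2)·J(0,α). (This is the algebraic content of the facts that the immersion u ↦ (Id₂, u) of SL(2,ℝ) into SL(2,ℝ)×SL(2,ℝ) is Lagrangian and that all its angle functions equal 4π/3.) -/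
open Matrix

/-- The immersion `u ↦ (Id₂, u)` is Lagrangian with all angle functions equal to `4π/3`. -/
theorem stmt_13 (α γ : Matrix (Fin 2) (Fin 2) ℝ)
    (hα : α.trace = 0) (hγ : γ.trace = 0) :
    g (0, α) (Jmap (0, γ)) = 0 ∧
    Pmap (0, α) = -(1/2 : ℝ) • ((0 : Matrix (Fin 2) (Fin 2) ℝ), α)
        - (Real.sqrt 3 / 2) • Jmap (0, α) := by
  have h3 : Real.sqrt 3 ≠ 0 := by positivity
  constructor
  · have hsmul : ∀ (c : ℝ) (a b : Matrix (Fin 2) (Fin 2) ℝ), ip a (c • b) = c * ip a b := by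
      intro c a b
      simp [ip, Matrix.mul_smul, Matrix.trace_smul]
      ring
    simp only [g, ipE, Jmap, Prod.smul_fst, Prod.smul_snd, smul_smul]
    simp only [Prod.fst, Prod.snd, hsmul, ip, Matrix.adjugate_zero, Matrix.zero_mul,
      Matrix.trace_zero, zero_smul, smul_sub, smul_zero, zero_sub, sub_zero,
      Matrix.mul_zero, Matrix.trace_smul, Matrix.mul_smul, Matrix.mul_sub,
      Matrix.trace_sub, Matrix.trace_neg, smul_eq_mul]
    simp only [Matrix.mul_neg, Matrix.mul_smul, Matrix.trace_neg, Matrix.trace_smul,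
      smul_eq_mul]
    ring
  · have h2 : Real.sqrt 3 / 2 * (Real.sqrt 3)⁻¹ = 1/2 := by
      field_simp
    simp only [Pmap, Jmap, Prod.smul_mk, Prod.neg_mk, Prod.mk_sub_mk, smul_smul, h2]
    ext i j <;> simp <;> module
end
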